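/- arXiv:2505.01111 — 2 statements merged into one kernel-verified Lean document; each statement's English description precedes it below -/
import Mathlib

section
/- Let μ be a σ-finite measure on ℝ^d, F : ℝ^d → ℝ and T : ℝ^d → ℝ^k be measurable, and define the partition function Z(η) = ∫ exp(F(x) + ⟪η, T(x)⟫) dμ(x) for η ∈ ℝ^k. Fix data points x_1, …, x_N ∈ ℝ^d and define the log-likelihood l(η) = ∑_{i=1}^N (F(x_i) + ⟪η, T(x_i)⟫) − N · log Z(η). Suppose that at a point η* one has 0 < Z(η*) < ∞, that x ↦ T(x)·exp(F(x) + ⟪η*, T(x)⟫) is μ-integrable, and that Z is differentiable at η* with Fréchet derivative η' ↦ ∫ ⟪η', T(x)⟫ exp(F(x) + ⟪η*, T(x)⟫) dμ(x). If η* is a local maximum of l, then the model mean of the statistic equals the sample mean: (1/Z(η*)) ∫ T(x) exp(F(x) + ⟪η*, T(x)⟫) dμ(x) = (1/N) ∑_{i=1}^N T(x_i). -/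
open MeasureTheory Real InnerProductSpace
open scoped RealInnerProductSpace BigOperators

/-!
At an interior local maximum the gradient of the log-likelihood vanishes. Since
`η ↦ ⟪η, T xᵢ⟫` has gradient `T xᵢ` and `log Z` has gradient `∇Z / Z`, this says
`∑ᵢ T xᵢ = N • ∇Z(η*) / Z(η*)`, and `∇Z(η*)` is the unnormalised model mean of `T`.
-/

section Gradient

variable {𝕜 E : Type*} [RCLike 𝕜] [NormedAddCommGroup E] [InnerProductSpace 𝕜 E]
  [CompleteSpace E] {f g : E → 𝕜} {f' g' x : E}

theorem HasGradientAt.add (hf : HasGradientAt f f' x) (hg : HasGradientAt g g' x) :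
    HasGradientAt (fun y => f y + g y) (f' + g') x := by
  rw [hasGradientAt_iff_hasFDerivAt, map_add]
  exact hf.hasFDerivAt.add hg.hasFDerivAt

theorem HasGradientAt.sub (hf : HasGradientAt f f' x) (hg : HasGradientAt g g' x) :
    HasGradientAt (fun y => f y - g y) (f' - g') x := by
  rw [hasGradientAt_iff_hasFDerivAt, map_sub]
  exact hf.hasFDerivAt.sub hg.hasFDerivAt

theorem HasGradientAt.const_add (c : 𝕜) (hf : HasGradientAt f f' x) :
    HasGradientAt (fun y => c + f y) f' x := by
  simpa using (hasGradientAt_const x c).add hf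

end Gradient

section RealGradient

variable {E : Type*} [NormedAddCommGroup E] [InnerProductSpace ℝ E] [CompleteSpace E]
  {f : E → ℝ} {f' x : E}

theorem hasGradientAt_inner_const (s x : E) : HasGradientAt (fun y => ⟪y, s⟫) s x := by
  rw [hasGradientAt_iff_hasFDerivAt]
  exact (toDual ℝ E s).hasFDerivAt.congr_of_eventuallyEq
    (.of_forall fun y => real_inner_comm s y)

theorem IsLocalMax.hasGradientAt_eq_zero (hmax : IsLocalMax f x)
    (hf : HasGradientAt f f' x) : f' = 0 :=
  (toDual ℝ E).map_eq_zero_iff.mp (hmax.hasFDerivAt_eq_zero hf.hasFDerivAt)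

theorem HasGradientAt.const_mul (c : ℝ) (hf : HasGradientAt f f' x) :
    HasGradientAt (fun y => c * f y) (c • f') x := by
  rw [hasGradientAt_iff_hasFDerivAt, map_smul]
  exact hf.hasFDerivAt.const_mul c

theorem HasGradientAt.log (hf : HasGradientAt f f' x) (hx : f x ≠ 0) :
    HasGradientAt (fun y => Real.log (f y)) ((f x)⁻¹ • f') x := by
  rw [hasGradientAt_iff_hasFDerivAt, map_smul]
  exact hf.hasFDerivAt.log hx

theorem inv_smul_gradient_eq_of_isLocalMax {Z : E → ℝ} {G η : E} {s : E} {c n : ℝ}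
    (hn : n ≠ 0) (hZ : HasGradientAt Z G η) (hZη : Z η ≠ 0)
    (hmax : IsLocalMax (fun η => c + ⟪η, s⟫ - n * Real.log (Z η)) η) :
    (Z η)⁻¹ • G = n⁻¹ • s := by
  have hgrad : HasGradientAt (fun η => c + ⟪η, s⟫ - n * Real.log (Z η))
      (s - n • (Z η)⁻¹ • G) η :=
    ((hasGradientAt_inner_const s η).const_add c).sub ((hZ.log hZη).const_mul n)
  have hs : s = n • (Z η)⁻¹ • G := sub_eq_zero.mp (hmax.hasGradientAt_eq_zero hgrad)
  rw [hs, inv_smul_smul₀ hn]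

end RealGradient

theorem hybrid_ebm_local_max_matches_statistics_general
    {d k : ℕ} (μ : Measure (EuclideanSpace ℝ (Fin d)))
    (F : EuclideanSpace ℝ (Fin d) → ℝ)
    (T : EuclideanSpace ℝ (Fin d) → EuclideanSpace ℝ (Fin k))
    (Z : EuclideanSpace ℝ (Fin k) → ℝ)
    (N : ℕ) (hN : 0 < N) (xs : Fin N → EuclideanSpace ℝ (Fin d))
    (l : EuclideanSpace ℝ (Fin k) → ℝ)
    (hl : ∀ η, l η = ∑ i, (F (xs i) + ⟪η, T (xs i)⟫) - N * Real.log (Z η))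
    (ηs : EuclideanSpace ℝ (Fin k))
    (hZpos : 0 < Z ηs)
    (hderiv : HasGradientAt Z (∫ x, Real.exp (F x + ⟪ηs, T x⟫) • T x ∂μ) ηs)
    (hmax : IsLocalMax l ηs) :
    (Z ηs)⁻¹ • (∫ x, Real.exp (F x + ⟪ηs, T x⟫) • T x ∂μ)
      = (N : ℝ)⁻¹ • ∑ i, T (xs i) := by
  have hl' : l = fun η => ∑ i, F (xs i) + ⟪η, ∑ i, T (xs i)⟫ - N * Real.log (Z η) := by
    funext η
    rw [hl, Finset.sum_add_distrib, inner_sum]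
  rw [hl'] at hmax
  exact inv_smul_gradient_eq_of_isLocalMax (Nat.cast_ne_zero.mpr hN.ne') hderiv hZpos.ne' hmax

/-- If the parameter `ηs` is a local maximum of the log-likelihood of the hybrid
energy-based model `p_η(x) ∝ exp (F x + ⟪η, T x⟫)`, then the model mean of the
statistic `T` equals its sample mean over the data. -/
theorem hybrid_ebm_local_max_matches_statistics
    {d k : ℕ} (μ : Measure (EuclideanSpace ℝ (Fin d))) [SigmaFinite μ]
    (F : EuclideanSpace ℝ (Fin d) → ℝ)
    (T : EuclideanSpace ℝ (Fin d) → EuclideanSpace ℝ (Fin k))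
    (hF : Measurable F) (hT : Measurable T)
    (Z : EuclideanSpace ℝ (Fin k) → ℝ)
    (hZ : ∀ η, Z η = ∫ x, Real.exp (F x + ⟪η, T x⟫) ∂μ)
    (N : ℕ) (hN : 0 < N) (xs : Fin N → EuclideanSpace ℝ (Fin d))
    (l : EuclideanSpace ℝ (Fin k) → ℝ)
    (hl : ∀ η, l η = ∑ i, (F (xs i) + ⟪η, T (xs i)⟫) - N * Real.log (Z η))
    (ηs : EuclideanSpace ℝ (Fin k))
    (hZpos : 0 < Z ηs)
    (hZfin : Integrable (fun x => Real.exp (F x + ⟪ηs, T x⟫)) μ)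
    (hTint : Integrable (fun x => Real.exp (F x + ⟪ηs, T x⟫) • T x) μ)
    (hderiv : HasGradientAt Z (∫ x, Real.exp (F x + ⟪ηs, T x⟫) • T x ∂μ) ηs)
    (hmax : IsLocalMax l ηs) :
    (Z ηs)⁻¹ • (∫ x, Real.exp (F x + ⟪ηs, T x⟫) • T x ∂μ)
      = (N : ℝ)⁻¹ • ∑ i, T (xs i) :=
  hybrid_ebm_local_max_matches_statistics_general μ F T Z N hN xs l hl ηs hZpos hderiv hmax
end

section
/- Let μ be a σ-finite measure on ℝ^d, F : ℝ^d → ℝ measurable, and T : ℝ^d → ℝ a measurable statistic with T(x) ≥ 0 for μ-a.e. x. Let x_1, …, x_N ∈ ℝ^d be data points with T(x_i) = 0 for every i. Suppose at η* ∈ ℝ one has 0 < Z(η*) < ∞ where Z(η) = ∫ exp(F(x) + η·T(x)) dμ(x), that x ↦ T(x)·exp(F(x) + η*·T(x)) is μ-integrable, that Z is differentiable at η* with Z'(η*) = ∫ T(x) exp(F(x) + η*·T(x)) dμ(x), and that η* is a local maximum of l(η) = ∑_{i=1}^N (F(x_i) + η·T(x_i)) − N·log Z(η). Then the model's expected statistic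 is zero, E_{p_{η*}}[T] = (1/Z(η*)) ∫ T(x) exp(F(x) + η*·T(x)) dμ(x) = 0, and consequently T(x) = 0 for p_{η*}-almost every x; i.e., the model assigns probability zero to the set {x : T(x) > 0}. -/
/-!
On valid data the sufficient-statistic term of the log-likelihood vanishes, so
`l η = const - N log Z η`. Its derivative at the local maximum is `-N Z'(η*) / Z(η*)`, hence
`∫ T exp(F + η* T) dμ = Z'(η*) = 0`. A nonnegative integrand with zero integral vanishes a.e.,
and `exp > 0`, so `T = 0` μ-a.e.; the model measure is absolutely continuous w.r.t. `μ`.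
-/

open MeasureTheory Real
open scoped BigOperators

theorem hasDerivAt_eq_zero_of_isLocalMax_const_sub_mul_log {Z : ℝ → ℝ} {Z' x c N : ℝ}
    (hZ : HasDerivAt Z Z' x) (hpos : 0 < Z x) (hN : N ≠ 0)
    (hmax : IsLocalMax (fun η => c - N * Real.log (Z η)) x) : Z' = 0 := by
  have hderiv := hmax.hasDerivAt_eq_zero (((hZ.log hpos.ne').const_mul N).const_sub c)
  simpa [hN, hpos.ne'] using hderiv

theorem ae_eq_zero_of_integral_mul_eq_zero {α : Type*} [MeasurableSpace α] {μ : Measure α}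
    {T w : α → ℝ} (hT : ∀ᵐ x ∂μ, 0 ≤ T x) (hw : ∀ᵐ x ∂μ, 0 < w x)
    (hint : Integrable (fun x => T x * w x) μ) (hzero : ∫ x, T x * w x ∂μ = 0) :
    ∀ᵐ x ∂μ, T x = 0 := by
  have hnn : 0 ≤ᵐ[μ] fun x => T x * w x := by
    filter_upwards [hT, hw] with x hTx hwx using mul_nonneg hTx hwx.le
  filter_upwards [(integral_eq_zero_iff_of_nonneg_ae hnn hint).mp hzero, hw] with x hx hwx
  exact (mul_eq_zero.mp hx).resolve_right hwx.ne'

theorem withDensity_setOf_pos_eq_zero {α : Type*} [MeasurableSpace α] {μ : Measure α}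
    {T : α → ℝ} (hT : ∀ᵐ x ∂μ, T x = 0) (f : α → ENNReal) :
    μ.withDensity f {x | 0 < T x} = 0 :=
  withDensity_absolutelyContinuous μ f <| measure_mono_null (fun _ hx => hx.ne') (ae_iff.mp hT)

theorem hybrid_ebm_constraint_imposed_at_local_max_general
    {d : ℕ} (μ : Measure (EuclideanSpace ℝ (Fin d)))
    (F : EuclideanSpace ℝ (Fin d) → ℝ) (T : EuclideanSpace ℝ (Fin d) → ℝ)
    (hTnn : ∀ᵐ x ∂μ, 0 ≤ T x)
    (N : ℕ) (hN : 0 < N) (xs : Fin N → EuclideanSpace ℝ (Fin d))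
    (hdata : ∀ i, T (xs i) = 0)
    (Z : ℝ → ℝ)
    (ηs : ℝ)
    (hZpos : 0 < Z ηs)
    (hTint : Integrable (fun x => T x * Real.exp (F x + ηs * T x)) μ)
    (hderiv : HasDerivAt Z (∫ x, T x * Real.exp (F x + ηs * T x) ∂μ) ηs)
    (l : ℝ → ℝ)
    (hl : ∀ η, l η = ∑ i, (F (xs i) + η * T (xs i)) - N * Real.log (Z η))
    (hmax : IsLocalMax l ηs) :
    (Z ηs)⁻¹ * (∫ x, T x * Real.exp (F x + ηs * T x) ∂μ) = 0 ∧
    μ.withDensity (fun x => ENNReal.ofReal (Real.exp (F x + ηs * T x) / Z ηs))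
      {x | 0 < T x} = 0 := by
  have hl_valid : l = fun η => (∑ i, F (xs i)) - N * Real.log (Z η) := by
    funext η
    simp [hl, hdata]
  have hmean : ∫ x, T x * Real.exp (F x + ηs * T x) ∂μ = 0 :=
    hasDerivAt_eq_zero_of_isLocalMax_const_sub_mul_log hderiv hZpos (by positivity)
      (hl_valid ▸ hmax)
  have hT0 : ∀ᵐ x ∂μ, T x = 0 :=
    ae_eq_zero_of_integral_mul_eq_zero hTnn (ae_of_all _ fun _ => Real.exp_pos _) hTint hmean
  exact ⟨by rw [hmean, mul_zero], withDensity_setOf_pos_eq_zero hT0 _⟩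

/-- For a scalar statistic `T ≥ 0` with `T (xs i) = 0` on every data point, at a local
maximum `ηs` of the log-likelihood of the hybrid energy-based model the model mean of
`T` vanishes, and the model measure `p_{ηs} = (exp (F + ηs·T) / Z ηs) · μ` assigns
probability zero to the set `{x | T x > 0}`. -/
theorem hybrid_ebm_constraint_imposed_at_local_max
    {d : ℕ} (μ : Measure (EuclideanSpace ℝ (Fin d))) [SigmaFinite μ]
    (F : EuclideanSpace ℝ (Fin d) → ℝ) (T : EuclideanSpace ℝ (Fin d) → ℝ)
    (hF : Measurable F) (hT : Measurable T)
    (hTnn : ∀ᵐ x ∂μ, 0 ≤ T x)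
    (N : ℕ) (hN : 0 < N) (xs : Fin N → EuclideanSpace ℝ (Fin d))
    (hdata : ∀ i, T (xs i) = 0)
    (Z : ℝ → ℝ)
    (hZ : ∀ η, Z η = ∫ x, Real.exp (F x + η * T x) ∂μ)
    (ηs : ℝ)
    (hZpos : 0 < Z ηs)
    (hZfin : Integrable (fun x => Real.exp (F x + ηs * T x)) μ)
    (hTint : Integrable (fun x => T x * Real.exp (F x + ηs * T x)) μ)
    (hderiv : HasDerivAt Z (∫ x, T x * Real.exp (F x + ηs * T x) ∂μ) ηs)
    (l : ℝ → ℝ)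
    (hl : ∀ η, l η = ∑ i, (F (xs i) + η * T (xs i)) - N * Real.log (Z η))
    (hmax : IsLocalMax l ηs) :
    (Z ηs)⁻¹ * (∫ x, T x * Real.exp (F x + ηs * T x) ∂μ) = 0 ∧
    μ.withDensity (fun x => ENNReal.ofReal (Real.exp (F x + ηs * T x) / Z ηs))
      {x | 0 < T x} = 0 :=
  hybrid_ebm_constraint_imposed_at_local_max_general μ F T hTnn N hN xs hdata Z ηs hZpos hTint
    hderiv l hl hmax
end
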